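/- arXiv:1701.08032 — 4 statements merged into one kernel-verified Lean document; each statement's English description precedes it below -/
import Mathlib

section
/- Assume f satisfies (f), D satisfies (D), and 0 ≤ ℓ⁻ < ℓ⁺ ≤ 1, with speed c = (f(ℓ⁺)−f(ℓ⁻))/(ℓ⁺−ℓ⁻) and reduced flux g(ρ) = f(ρ) − cρ. Then there exists a profile, i.e. a continuous non-decreasing function φ : ℝ → [ℓ⁻, ℓ⁺] with lim_{ξ→−∞} φ(ξ) = ℓ⁻ and lim_{ξ→+∞} φ(ξ) = ℓ⁺, which on the open set I = {ξ ∈ ℝ : ℓ⁻ < φ(ξ) < ℓ⁺} is twice continuously differentiable with φ′(ξ) > 0 and satisfies D(φ(ξ)) φ′(ξ) = g(φ(ξ)) − g(ℓ⁻) for every ξ ∈ I. Moreover, the profile is unique up to translation: if φ₁ and φ₂ are two functions with all these properties, then there exists σ ∈ ℝ such that φ₂(ξ) = φ₁(ξ + σ) for all ξ ∈ ℝ. -/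
/-!
With `G = g - g(ℓ⁻)`, which is positive on `(ℓ⁻, ℓ⁺)` because `f` lies strictly above its chord,
the equation `D(φ) φ' = G(φ)` separates: `H(φ(ξ)) = ξ + const` wherever `ℓ⁻ < φ(ξ) < ℓ⁺`, for a
primitive `H` of `D / G`, which is strictly increasing. Conversely the inverse of `H`, extended by
`ℓ⁻` below and by `ℓ⁺` above the range of `H`, is a profile. A monotone profile with these limits
is determined by where it crosses each level in `(ℓ⁻, ℓ⁺)`, so every profile is a translate of
this one.
-/

open Set Filter MeasureTheory
open scoped Topology Classical

/-- Assumption (f): `f ∈ C¹([0,1];ℝ)` is nonnegative, strictly concave, `f 0 = f 1 = 0`. -/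
def FluxAssumption (f : ℝ → ℝ) : Prop :=
  ContDiffOn ℝ 1 f (Icc 0 1) ∧ StrictConcaveOn ℝ (Icc 0 1) f ∧
  (∀ x ∈ Icc (0:ℝ) 1, 0 ≤ f x) ∧ f 0 = 0 ∧ f 1 = 0

/-- Assumption (D): `D ∈ C¹([0,1];ℝ)` is nonnegative and positive on `(0,1)`. -/
def DiffAssumption (D : ℝ → ℝ) : Prop :=
  ContDiffOn ℝ 1 D (Icc 0 1) ∧ (∀ x ∈ Icc (0:ℝ) 1, 0 ≤ D x) ∧
  (∀ x ∈ Ioo (0:ℝ) 1, 0 < D x)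

/-- The wave speed `c = (f(ℓ⁺) - f(ℓ⁻))/(ℓ⁺ - ℓ⁻)`. -/
noncomputable def waveSpeed (f : ℝ → ℝ) (a b : ℝ) : ℝ := (f b - f a) / (b - a)

/-- The reduced flux `g(ρ) = f(ρ) - c ρ`. -/
noncomputable def redFlux (f : ℝ → ℝ) (a b ρ : ℝ) : ℝ := f ρ - waveSpeed f a b * ρ

/-- A profile for data `f, D, ℓ⁻ = a, ℓ⁺ = b`: continuous, non-decreasing, with values in
`[a,b]`, limits `a` at `-∞` and `b` at `+∞`, `C²` on `I = {ξ | a < φ ξ < b}` with positive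
derivative there, satisfying `D(φ) φ' = g(φ) - g(a)` on `I`. -/
def IsProfile (f D : ℝ → ℝ) (a b : ℝ) (φ : ℝ → ℝ) : Prop :=
  Continuous φ ∧ Monotone φ ∧ (∀ ξ, φ ξ ∈ Icc a b) ∧
  Tendsto φ atBot (𝓝 a) ∧ Tendsto φ atTop (𝓝 b) ∧
  ContDiffOn ℝ 2 φ {ξ | a < φ ξ ∧ φ ξ < b} ∧
  ∀ ξ, a < φ ξ → φ ξ < b →
    0 < deriv φ ξ ∧ D (φ ξ) * deriv φ ξ = redFlux f a b (φ ξ) - redFlux f a b a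

section MonotoneOnto

variable {φ : ℝ → ℝ} {a b : ℝ}

theorem Monotone.continuous_of_Ioo_subset_range (hmono : Monotone φ)
    (hmem : ∀ ξ, φ ξ ∈ Icc a b) (hrange : Ioo a b ⊆ range φ) : Continuous φ := by
  refine continuous_iff_continuousAt.2 fun ξ₀ => tendsto_order.2 ⟨fun p hp => ?_, fun q hq => ?_⟩
  · rcases lt_or_ge p a with hpa | hap
    · exact Eventually.of_forall fun ξ => hpa.trans_le (hmem ξ).1
    obtain ⟨u, hpu, huξ⟩ := exists_between hp
    obtain ⟨ζ, rfl⟩ := hrange ⟨hap.trans_lt hpu, huξ.trans_le (hmem ξ₀).2⟩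
    filter_upwards [Ioi_mem_nhds (hmono.reflect_lt huξ)] with ξ hξ using
      hpu.trans_le (hmono hξ.le)
  · rcases lt_or_ge b q with hbq | hqb
    · exact Eventually.of_forall fun ξ => (hmem ξ).2.trans_lt hbq
    obtain ⟨u, hξu, huq⟩ := exists_between hq
    obtain ⟨ζ, rfl⟩ := hrange ⟨(hmem ξ₀).1.trans_lt hξu, huq.trans_le hqb⟩
    filter_upwards [Iio_mem_nhds (hmono.reflect_lt hξu)] with ξ hξ using
      (hmono hξ.le).trans_lt huq

theorem Monotone.tendsto_atBot_of_Ioo_subset_range (hmono : Monotone φ) (hab : a < b)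
    (hmem : ∀ ξ, φ ξ ∈ Icc a b) (hrange : Ioo a b ⊆ range φ) : Tendsto φ atBot (𝓝 a) := by
  refine tendsto_order.2 ⟨fun p hp => Eventually.of_forall fun ξ => hp.trans_le (hmem ξ).1,
    fun q hq => ?_⟩
  obtain ⟨u, hau, huq⟩ := exists_between (lt_min hab hq)
  obtain ⟨ζ, rfl⟩ := hrange ⟨hau, huq.trans_le (min_le_left _ _)⟩
  exact eventually_atBot.2 ⟨ζ, fun ξ hξ => (hmono hξ).trans_lt (huq.trans_le (min_le_right _ _))⟩

theorem Monotone.tendsto_atTop_of_Ioo_subset_range (hmono : Monotone φ) (hab : a < b)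
    (hmem : ∀ ξ, φ ξ ∈ Icc a b) (hrange : Ioo a b ⊆ range φ) : Tendsto φ atTop (𝓝 b) := by
  refine tendsto_order.2 ⟨fun p hp => ?_,
    fun q hq => Eventually.of_forall fun ξ => (hmem ξ).2.trans_lt hq⟩
  obtain ⟨u, hpu, hub⟩ := exists_between (max_lt hab hp)
  obtain ⟨ζ, rfl⟩ := hrange ⟨(le_max_left _ _).trans_lt hpu, hub⟩
  exact eventually_atTop.2 ⟨ζ, fun ξ hξ => ((le_max_right _ _).trans_lt hpu).trans_le (hmono hξ)⟩

theorem Continuous.Ioo_subset_range_of_tendsto (hφ : Continuous φ)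
    (hbot : Tendsto φ atBot (𝓝 a)) (htop : Tendsto φ atTop (𝓝 b)) : Ioo a b ⊆ range φ :=
  fun _ hu => mem_range_of_exists_le_of_exists_ge hφ
    ((hbot.eventually (gt_mem_nhds hu.1)).exists.imp fun _ => le_of_lt)
    ((htop.eventually (lt_mem_nhds hu.2)).exists.imp fun _ => le_of_lt)

end MonotoneOnto

section GenInv

variable {H φ : ℝ → ℝ} {a b ξ u : ℝ}

/-- The range of `H` on `(a, b)` need not be all of `ℝ`; `genInv` takes the value `a` below it
and `b` above it. -/
noncomputable def genInv (H : ℝ → ℝ) (a b ξ : ℝ) : ℝ :=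
  sSup (insert a {u | u ∈ Ioo a b ∧ H u ≤ ξ})

theorem right_mem_upperBounds_genInv (hab : a ≤ b) :
    b ∈ upperBounds (insert a {u | u ∈ Ioo a b ∧ H u ≤ ξ}) := by
  rintro v (rfl | ⟨hv, -⟩)
  exacts [hab, hv.2.le]

theorem genInv_mem_Icc (hab : a ≤ b) (ξ : ℝ) : genInv H a b ξ ∈ Icc a b :=
  ⟨le_csSup ⟨b, right_mem_upperBounds_genInv hab⟩ (mem_insert a _),
    csSup_le (insert_nonempty _ _) (right_mem_upperBounds_genInv hab)⟩

theorem genInv_mono (hab : a ≤ b) : Monotone (genInv H a b) := by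
  refine fun ξ ζ hξζ =>
    csSup_le_csSup ⟨b, right_mem_upperBounds_genInv hab⟩ (insert_nonempty _ _) ?_
  rintro v (rfl | ⟨hv, hHv⟩)
  exacts [mem_insert _ _, mem_insert_of_mem _ ⟨hv, hHv.trans hξζ⟩]

theorem genInv_apply (hH : StrictMonoOn H (Ioo a b)) (hu : u ∈ Ioo a b) :
    genInv H a b (H u) = u := by
  refine IsGreatest.csSup_eq ⟨mem_insert_of_mem _ ⟨hu, le_rfl⟩, ?_⟩
  rintro v (rfl | ⟨hv, hHv⟩)
  exacts [hu.1.le, (hH.le_iff_le hv hu).1 hHv]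

theorem Ioo_subset_range_genInv (hH : StrictMonoOn H (Ioo a b)) : Ioo a b ⊆ range (genInv H a b) :=
  fun u hu => ⟨H u, genInv_apply hH hu⟩

theorem genInv_eq_left (h : ∀ u ∈ Ioo a b, ξ < H u) : genInv H a b ξ = a := by
  refine IsGreatest.csSup_eq ⟨mem_insert a _, ?_⟩
  rintro v (rfl | ⟨hv, hHv⟩)
  exacts [le_rfl, absurd hHv (h v hv).not_ge]

theorem genInv_eq_right (hab : a < b) (h : ∀ u ∈ Ioo a b, H u ≤ ξ) : genInv H a b ξ = b := by
  refine csSup_eq_of_forall_le_of_forall_lt_exists_gt (insert_nonempty _ _)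
    (right_mem_upperBounds_genInv hab.le) fun v hv => ?_
  obtain ⟨u, hu, hub⟩ := exists_between (max_lt hab hv)
  have hu' : u ∈ Ioo a b := ⟨(le_max_left _ _).trans_lt hu, hub⟩
  exact ⟨u, mem_insert_of_mem _ ⟨hu', h u hu'⟩, (le_max_right _ _).trans_lt hu⟩

theorem apply_genInv (hH : StrictMonoOn H (Ioo a b)) (hHc : ContinuousOn H (Ioo a b))
    (hξ : genInv H a b ξ ∈ Ioo a b) : H (genInv H a b ξ) = ξ := by
  have hab : a < b := hξ.1.trans hξ.2
  suffices ξ ∈ H '' Ioo a b by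
    obtain ⟨u, hu, rfl⟩ := this
    rw [genInv_apply hH hu]
  by_cases hbelow : ∀ u ∈ Ioo a b, ξ < H u
  · exact absurd (genInv_eq_left hbelow) hξ.1.ne'
  by_cases habove : ∀ u ∈ Ioo a b, H u ≤ ξ
  · exact absurd (genInv_eq_right hab habove) hξ.2.ne
  push Not at hbelow habove
  obtain ⟨u₁, hu₁, hHu₁⟩ := hbelow
  obtain ⟨u₂, hu₂, hHu₂⟩ := habove
  exact (isPreconnected_Ioo.image H hHc).ordConnected.out (mem_image_of_mem H hu₁)
    (mem_image_of_mem H hu₂) ⟨hHu₁, hHu₂.le⟩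

theorem continuous_genInv (hab : a ≤ b) (hH : StrictMonoOn H (Ioo a b)) :
    Continuous (genInv H a b) :=
  (genInv_mono hab).continuous_of_Ioo_subset_range (genInv_mem_Icc hab)
    (Ioo_subset_range_genInv hH)

theorem hasDerivAt_genInv (hH : StrictMonoOn H (Ioo a b)) (hHc : ContinuousOn H (Ioo a b))
    (hξ : genInv H a b ξ ∈ Ioo a b) {H' : ℝ} (hH' : HasDerivAt H H' (genInv H a b ξ))
    (hH'0 : H' ≠ 0) : HasDerivAt (genInv H a b) H'⁻¹ ξ := by
  have hcont := continuous_genInv (hξ.1.trans hξ.2).le hH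
  refine hH'.of_local_left_inverse hcont.continuousAt hH'0 ?_
  filter_upwards [isOpen_Ioo.preimage hcont |>.mem_nhds hξ] with ζ hζ using apply_genInv hH hHc hζ

theorem eq_genInv_of_apply_eq_add (hmono : Monotone φ) (hmem : ∀ ξ, φ ξ ∈ Icc a b)
    (hrange : Ioo a b ⊆ range φ) {c : ℝ} (hHφ : ∀ ξ, φ ξ ∈ Ioo a b → H (φ ξ) = ξ + c) (ξ : ℝ) :
    φ ξ = genInv H a b (ξ + c) := by
  refine (csSup_eq_of_forall_le_of_forall_lt_exists_gt (insert_nonempty _ _) ?_ ?_).symm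
  · rintro v (rfl | ⟨hv, hHv⟩)
    · exact (hmem ξ).1
    obtain ⟨ζ, rfl⟩ := hrange hv
    rw [hHφ ζ hv, add_le_add_iff_right] at hHv
    exact hmono hHv
  · intro v hv
    rcases lt_or_ge v a with hva | hav
    · exact ⟨a, mem_insert a _, hva⟩
    obtain ⟨u, hvu, huξ⟩ := exists_between hv
    have hu : u ∈ Ioo a b := ⟨hav.trans_lt hvu, huξ.trans_le (hmem ξ).2⟩
    obtain ⟨ζ, rfl⟩ := hrange hu
    refine ⟨φ ζ, mem_insert_of_mem _ ⟨hu, ?_⟩, hvu⟩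
    rw [hHφ ζ hu]
    linarith [hmono.reflect_lt huξ]

end GenInv

theorem contDiffOn_succ_of_hasDerivAt_comp {φ F : ℝ → ℝ} {I U : Set ℝ} (hI : IsOpen I)
    (hφU : MapsTo φ I U) (hφ : ∀ ξ ∈ I, HasDerivAt φ (F (φ ξ)) ξ) (n : ℕ)
    (hF : ContDiffOn ℝ n F U) : ContDiffOn ℝ (n + 1) φ I := by
  have hdiff : DifferentiableOn ℝ φ I := fun ξ hξ =>
    (hφ ξ hξ).differentiableAt.differentiableWithinAt
  refine (contDiffOn_succ_iff_deriv_of_isOpen hI).2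
    ⟨hdiff, by simp, ContDiffOn.congr (hF.comp ?_ hφU) fun ξ hξ => (hφ ξ hξ).deriv⟩
  cases n with
  | zero => exact contDiffOn_zero.2 hdiff.continuousOn
  | succ n => exact contDiffOn_succ_of_hasDerivAt_comp hI hφU hφ n hF.of_succ

section SeparableODE

variable {D G φ : ℝ → ℝ} {a b : ℝ}

def IsODEProfile (D G : ℝ → ℝ) (a b : ℝ) (φ : ℝ → ℝ) : Prop :=
  Continuous φ ∧ Monotone φ ∧ (∀ ξ, φ ξ ∈ Icc a b) ∧
  Tendsto φ atBot (𝓝 a) ∧ Tendsto φ atTop (𝓝 b) ∧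
  ContDiffOn ℝ 2 φ {ξ | a < φ ξ ∧ φ ξ < b} ∧
  ∀ ξ, a < φ ξ → φ ξ < b → 0 < deriv φ ξ ∧ D (φ ξ) * deriv φ ξ = G (φ ξ)

noncomputable def profilePotential (D G : ℝ → ℝ) (a b u : ℝ) : ℝ :=
  ∫ t in (a + b) / 2..u, D t / G t

noncomputable def profile (D G : ℝ → ℝ) (a b : ℝ) : ℝ → ℝ :=
  genInv (profilePotential D G a b) a b

theorem hasDerivAt_profilePotential (hDG : ContinuousOn (fun t => D t / G t) (Ioo a b))
    {u : ℝ} (hu : u ∈ Ioo a b) : HasDerivAt (profilePotential D G a b) (D u / G u) u := by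
  have hmid : (a + b) / 2 ∈ Ioo a b := ⟨by linarith [hu.1, hu.2], by linarith [hu.1, hu.2]⟩
  exact intervalIntegral.integral_hasDerivAt_right
    ((hDG.mono (ordConnected_Ioo.uIcc_subset hmid hu)).intervalIntegrable)
    (hDG.stronglyMeasurableAtFilter isOpen_Ioo u hu)
    (hDG.continuousAt (Ioo_mem_nhds hu.1 hu.2))

theorem strictMonoOn_profilePotential (hDG : ContinuousOn (fun t => D t / G t) (Ioo a b))
    (hpos : ∀ u ∈ Ioo a b, 0 < D u / G u) : StrictMonoOn (profilePotential D G a b) (Ioo a b) :=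
  strictMonoOn_of_hasDerivWithinAt_pos (convex_Ioo a b)
    (fun _ hu => (hasDerivAt_profilePotential hDG hu).continuousAt.continuousWithinAt)
    (fun _ hu => (hasDerivAt_profilePotential hDG (interior_subset hu)).hasDerivWithinAt)
    (fun _ hu => hpos _ (interior_subset hu))

theorem isODEProfile_profile (hab : a < b) (hD : ContDiffOn ℝ 1 D (Ioo a b))
    (hG : ContDiffOn ℝ 1 G (Ioo a b)) (hDpos : ∀ u ∈ Ioo a b, 0 < D u)
    (hGpos : ∀ u ∈ Ioo a b, 0 < G u) : IsODEProfile D G a b (profile D G a b) := by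
  have hDG : ContinuousOn (fun t => D t / G t) (Ioo a b) :=
    hD.continuousOn.div hG.continuousOn fun u hu => (hGpos u hu).ne'
  have hH := strictMonoOn_profilePotential hDG fun u hu => div_pos (hDpos u hu) (hGpos u hu)
  have hHc : ContinuousOn (profilePotential D G a b) (Ioo a b) := fun _ hu =>
    (hasDerivAt_profilePotential hDG hu).continuousAt.continuousWithinAt
  have hcont : Continuous (profile D G a b) := continuous_genInv hab.le hH
  have hmono : Monotone (profile D G a b) := genInv_mono hab.le
  have hmem : ∀ ξ, profile D G a b ξ ∈ Icc a b := genInv_mem_Icc hab.le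
  have hrange : Ioo a b ⊆ range (profile D G a b) := Ioo_subset_range_genInv hH
  have hderiv : ∀ ξ, profile D G a b ξ ∈ Ioo a b →
      HasDerivAt (profile D G a b) (G (profile D G a b ξ) / D (profile D G a b ξ)) ξ :=
    fun ξ hξ => by
      simpa only [profile, inv_div] using hasDerivAt_genInv hH hHc hξ
        (hasDerivAt_profilePotential hDG hξ) (div_pos (hDpos _ hξ) (hGpos _ hξ)).ne'
  refine ⟨hcont, hmono, hmem, hmono.tendsto_atBot_of_Ioo_subset_range hab hmem hrange,
    hmono.tendsto_atTop_of_Ioo_subset_range hab hmem hrange, ?_, fun ξ h₁ h₂ => ?_⟩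
  · exact contDiffOn_succ_of_hasDerivAt_comp (F := fun u => G u / D u)
      (isOpen_Ioo.preimage hcont) (mapsTo_preimage _ _) hderiv 1
      (hG.div hD fun u hu => (hDpos u hu).ne')
  · rw [(hderiv ξ ⟨h₁, h₂⟩).deriv]
    exact ⟨div_pos (hGpos _ ⟨h₁, h₂⟩) (hDpos _ ⟨h₁, h₂⟩),
      mul_div_cancel₀ _ (hDpos _ ⟨h₁, h₂⟩).ne'⟩

theorem IsODEProfile.exists_eq_profile_comp_add (hφ : IsODEProfile D G a b φ)
    (hD : ContinuousOn D (Ioo a b)) (hG : ContinuousOn G (Ioo a b))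
    (hG0 : ∀ u ∈ Ioo a b, G u ≠ 0) : ∃ c, ∀ ξ, φ ξ = profile D G a b (ξ + c) := by
  obtain ⟨hcont, hmono, hmem, hbot, htop, hC2, hode⟩ := hφ
  have hI : IsOpen {ξ | a < φ ξ ∧ φ ξ < b} := isOpen_Ioo.preimage hcont
  have hHφ : ∀ ξ ∈ {ξ | a < φ ξ ∧ φ ξ < b},
      HasDerivAt (fun ζ => profilePotential D G a b (φ ζ)) 1 ξ := by
    intro ξ hξ
    have hφ' : HasDerivAt φ (deriv φ ξ) ξ :=
      ((hC2.differentiableOn (by norm_num) ξ hξ).differentiableAt (hI.mem_nhds hξ)).hasDerivAt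
    have := (hasDerivAt_profilePotential (hD.div hG hG0) hξ).comp ξ hφ'
    rwa [div_mul_eq_mul_div, (hode ξ hξ.1 hξ.2).2, div_self (hG0 _ hξ)] at this
  obtain ⟨c, hc⟩ := hI.exists_eq_add_of_deriv_eq
    (ordConnected_Ioo.preimage_mono hmono).isPreconnected
    (fun ξ hξ => (hHφ ξ hξ).differentiableAt.differentiableWithinAt) differentiableOn_id
    (fun ξ hξ => by simp [(hHφ ξ hξ).deriv])
  exact ⟨c, eq_genInv_of_apply_eq_add hmono hmem (hcont.Ioo_subset_range_of_tendsto hbot htop)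
    fun ξ hξ => hc hξ⟩

theorem IsODEProfile.exists_eq_comp_add {φ₁ φ₂ : ℝ → ℝ} (h₁ : IsODEProfile D G a b φ₁)
    (h₂ : IsODEProfile D G a b φ₂) (hD : ContinuousOn D (Ioo a b))
    (hG : ContinuousOn G (Ioo a b)) (hG0 : ∀ u ∈ Ioo a b, G u ≠ 0) :
    ∃ σ, ∀ ξ, φ₂ ξ = φ₁ (ξ + σ) := by
  obtain ⟨c₁, hc₁⟩ := h₁.exists_eq_profile_comp_add hD hG hG0
  obtain ⟨c₂, hc₂⟩ := h₂.exists_eq_profile_comp_add hD hG hG0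
  exact ⟨c₂ - c₁, fun ξ => by rw [hc₂, hc₁, add_assoc, sub_add_cancel]⟩

end SeparableODE

theorem redFlux_sub_redFlux_pos {f : ℝ → ℝ} {a b u : ℝ} (hf : StrictConcaveOn ℝ (Icc a b) f)
    (hu : u ∈ Ioo a b) : 0 < redFlux f a b u - redFlux f a b a := by
  have hab : a < b := hu.1.trans hu.2
  have hslope := hf.secant_strict_mono (left_mem_Icc.2 hab.le) (Ioo_subset_Icc_self hu)
    (right_mem_Icc.2 hab.le) hu.1.ne' hab.ne' hu.2
  rw [lt_div_iff₀ (sub_pos.2 hu.1)] at hslope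
  simp only [redFlux, waveSpeed]
  linarith

/-- Existence of the traveling-wave profile and its uniqueness up to translation. -/
theorem stmt0 (f D : ℝ → ℝ) (hf : FluxAssumption f) (hD : DiffAssumption D)
    (lm lp : ℝ) (h0 : 0 ≤ lm) (hl : lm < lp) (h1 : lp ≤ 1) :
    (∃ φ : ℝ → ℝ, IsProfile f D lm lp φ) ∧
    ∀ φ₁ φ₂ : ℝ → ℝ, IsProfile f D lm lp φ₁ → IsProfile f D lm lp φ₂ →
      ∃ σ : ℝ, ∀ ξ : ℝ, φ₂ ξ = φ₁ (ξ + σ) := by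
  have hsub : Ioo lm lp ⊆ Icc 0 1 := fun u hu => ⟨h0.trans hu.1.le, hu.2.le.trans h1⟩
  set G := fun u => redFlux f lm lp u - redFlux f lm lp lm
  have hGpos : ∀ u ∈ Ioo lm lp, 0 < G u := fun u hu => redFlux_sub_redFlux_pos
    (hf.2.1.subset (Icc_subset_Icc h0 h1) (convex_Icc _ _)) hu
  have hG : ContDiffOn ℝ 1 G (Ioo lm lp) :=
    ((hf.1.mono hsub).sub (contDiffOn_const.mul contDiffOn_id)).sub contDiffOn_const
  have hDpos : ∀ u ∈ Ioo lm lp, 0 < D u := fun u hu =>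
    hD.2.2 u ⟨h0.trans_lt hu.1, hu.2.trans_le h1⟩
  have hDc := hD.1.mono hsub
  refine ⟨⟨profile D G lm lp, isODEProfile_profile hl hDc hG hDpos hGpos⟩, fun _ _ h₁ h₂ => ?_⟩
  exact IsODEProfile.exists_eq_comp_add (G := G) h₁ h₂ hDc.continuousOn hG.continuousOn
    fun u hu => (hGpos u hu).ne'
end

section
/- Assume f satisfies (f), D satisfies (D), 0 ≤ ℓ⁻ < ℓ⁺ ≤ 1, c = (f(ℓ⁺)−f(ℓ⁻))/(ℓ⁺−ℓ⁻), g(ρ) = f(ρ) − cρ, and let φ be a profile with I = {ξ : ℓ⁻ < φ(ξ) < ℓ⁺}. Then D(0) = 0 and ℓ⁻ = 0 hold if and only if there exists ν⁻ ∈ ℝ such that I ⊆ (ν⁻, ∞) and φ(ξ) = 0 for all ξ ≤ ν⁻. In that case: lim_{ξ↓ν⁻} φ′(ξ) = (ℓ⁺ f′(0) − f(ℓ⁺)) / (ℓ⁺ D′(0)) if D′(0) > 0, lim_{ξ↓ν⁻} φ′(ξ) = +∞ if D′(0) = 0, and lim_{ξ↓ν⁻} D(φ(ξ)) φ′(ξ)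 = 0. -/
open Set Filter MeasureTheory
open scoped Topology Classical

/-!
When `ℓ⁻ = 0`, near the left end of the support of `φ` the profile
equation reads `φ' = G(φ)` with `G(s) = (f(s) - c s) / D(s) = (f(s)/s - c) / (D(s)/s)`, where
`c = f(ℓ⁺)/ℓ⁺ < f'(0)` by strict concavity. If `D(0) > 0` then `G(s) = O(s)`, and by Gronwall's
inequality `φ` cannot reach `0` at a finite point. If `D(0) = 0` then `G(s)` tends to
`(f'(0) - c) / D'(0) > 0` or to `+∞` as `s ↓ 0`, so `φ' ≥ m > 0` wherever `φ` is small; a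
positive profile would then become negative as `ξ → -∞`. The same limits of `G` are the limits
of `φ'` at the left end point.
-/

lemma DifferentiableWithinAt.tendsto_div_self {u : ℝ → ℝ} {s : Set ℝ}
    (hu : DifferentiableWithinAt ℝ u s 0) (hs : s ∈ 𝓝[>] (0 : ℝ)) (hu0 : u 0 = 0) :
    Tendsto (fun x => u x / x) (𝓝[>] 0) (𝓝 (derivWithin u s 0)) := by
  refine ((hasDerivWithinAt_iff_tendsto_slope' (lt_irrefl 0)).1
    (hu.hasDerivWithinAt.mono_of_mem_nhdsWithin hs)).congr fun x => ?_
  simp [slope_def_field, hu0]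

lemma sub_mul_div_eq_div_div {a b c s : ℝ} (hs : s ≠ 0) :
    (a / s - c) / (b / s) = (a - c * s) / b := by
  rw [← div_div_div_cancel_right₀ hs (a - c * s) b, sub_div a (c * s) s,
    mul_div_cancel_right₀ c hs]

lemma le_mul_exp_of_deriv_le_mul {φ : ℝ → ℝ} {C a b : ℝ} (hab : a ≤ b)
    (hcont : ContinuousOn φ (Icc a b)) (hdiff : ∀ x ∈ Ioo a b, DifferentiableAt ℝ φ x)
    (hle : ∀ x ∈ Ioo a b, deriv φ x ≤ C * φ x) :
    φ b ≤ φ a * Real.exp (C * (b - a)) := by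
  have hu : ∀ x ∈ Ioo a b, HasDerivAt (fun x => φ x * Real.exp (-C * x))
      (deriv φ x * Real.exp (-C * x) + φ x * (Real.exp (-C * x) * -C)) x := fun x hx =>
    (hdiff x hx).hasDerivAt.mul ((hasDerivAt_id x).const_mul (-C) |>.exp |>.congr_deriv (by simp))
  have hanti : AntitoneOn (fun x => φ x * Real.exp (-C * x)) (Icc a b) := by
    refine antitoneOn_of_deriv_nonpos (convex_Icc a b) (hcont.mul (by fun_prop)) ?_ ?_ <;>
      rw [interior_Icc]
    · exact fun x hx => (hu x hx).differentiableAt.differentiableWithinAt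
    · intro x hx
      rw [(hu x hx).deriv]
      nlinarith [mul_le_mul_of_nonneg_left (hle x hx) (Real.exp_pos (-C * x)).le]
  have h := hanti (left_mem_Icc.2 hab) (right_mem_Icc.2 hab) hab
  calc φ b = φ b * Real.exp (-C * b) * Real.exp (C * b) := by
        rw [mul_assoc, ← Real.exp_add]; simp
    _ ≤ φ a * Real.exp (-C * a) * Real.exp (C * b) := by gcongr
    _ = φ a * Real.exp (C * (b - a)) := by
        rw [mul_assoc, ← Real.exp_add]; ring_nf

lemma tendsto_atBot_of_le_deriv {φ : ℝ → ℝ} {a m : ℝ} (hm : 0 < m)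
    (hcont : ContinuousOn φ (Iic a)) (hdiff : ∀ x < a, DifferentiableAt ℝ φ x)
    (hle : ∀ x < a, m ≤ deriv φ x) :
    Tendsto φ atBot atBot := by
  have hlin := (convex_Iic a).mul_sub_le_image_sub_of_le_deriv hcont
    (by rw [interior_Iic]; exact fun x hx => (hdiff x hx).differentiableWithinAt)
    (by rw [interior_Iic]; exact hle)
  refine tendsto_atBot_mono' atBot ?_
    (tendsto_atBot_add_const_right _ (φ a - m * a) (tendsto_id.const_mul_atBot hm))
  filter_upwards [eventually_le_atBot a] with x hx
  have := hlin x hx a (mem_Iic.2 le_rfl) hx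
  simp only [id]
  linarith

lemma exists_eq_zero_forall_lt_pos {φ : ℝ → ℝ} (hcont : Continuous φ) (hmono : Monotone φ)
    (hnonneg : ∀ x, 0 ≤ φ x) {z p : ℝ} (hz : φ z = 0) (hp : 0 < φ p) :
    ∃ ν, φ ν = 0 ∧ ∀ ξ, ν < ξ → 0 < φ ξ := by
  have hbdd : BddAbove {x | φ x ≤ 0} :=
    ⟨p, fun x hx => not_lt.1 fun hpx => (hp.trans_le (hmono hpx.le)).not_ge hx⟩
  have hmem := (isClosed_le hcont continuous_const).csSup_mem ⟨z, hz.le⟩ hbdd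
  exact ⟨_, le_antisymm hmem (hnonneg _),
    fun ξ hξ => not_le.1 fun h => hξ.not_ge (le_csSup hbdd h)⟩

lemma tendsto_nhdsGT_of_eq_zero {φ : ℝ → ℝ} {ν : ℝ} (hcont : Continuous φ) (hν : φ ν = 0)
    (hpos : ∀ ξ, ν < ξ → 0 < φ ξ) :
    Tendsto φ (𝓝[>] ν) (𝓝[>] 0) :=
  tendsto_nhdsWithin_iff.2
    ⟨hν ▸ hcont.continuousAt.continuousWithinAt, eventually_nhdsWithin_of_forall hpos⟩

section RatioLimits

variable {f D : ℝ → ℝ} {f' c : ℝ}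

lemma tendsto_sub_mul_div {D' : ℝ} (hf : Tendsto (fun s => f s / s) (𝓝[>] 0) (𝓝 f'))
    (hD : Tendsto (fun s => D s / s) (𝓝[>] 0) (𝓝 D')) (hD' : D' ≠ 0) :
    Tendsto (fun s => (f s - c * s) / D s) (𝓝[>] 0) (𝓝 ((f' - c) / D')) :=
  ((hf.sub_const c).div hD hD').congr' <| eventually_nhdsWithin_of_forall fun _ hs =>
    sub_mul_div_eq_div_div (ne_of_gt hs)

lemma tendsto_sub_mul_div_atTop (hf : Tendsto (fun s => f s / s) (𝓝[>] 0) (𝓝 f'))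
    (hD : Tendsto (fun s => D s / s) (𝓝[>] 0) (𝓝 0)) (hDpos : ∀ᶠ s in 𝓝[>] 0, 0 < D s)
    (hc : c < f') :
    Tendsto (fun s => (f s - c * s) / D s) (𝓝[>] 0) atTop := by
  have hDslope : Tendsto (fun s => D s / s) (𝓝[>] 0) (𝓝[>] 0) := tendsto_nhdsWithin_iff.2
    ⟨hD, (hDpos.and self_mem_nhdsWithin).mono fun _ hs => div_pos hs.1 hs.2⟩
  refine ((hf.sub_const c).pos_mul_atTop (sub_pos.2 hc)
    (tendsto_inv_nhdsGT_zero.comp hDslope)).congr' ?_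
  filter_upwards [self_mem_nhdsWithin] with s hs
  rw [Function.comp_apply, ← div_eq_mul_inv, sub_mul_div_eq_div_div (ne_of_gt hs)]

lemma exists_pos_eventually_le_sub_mul_div {D' : ℝ}
    (hf : Tendsto (fun s => f s / s) (𝓝[>] 0) (𝓝 f'))
    (hD : Tendsto (fun s => D s / s) (𝓝[>] 0) (𝓝 D')) (hDpos : ∀ᶠ s in 𝓝[>] 0, 0 < D s)
    (hc : c < f') :
    ∃ m > 0, ∀ᶠ s in 𝓝[>] 0, m ≤ (f s - c * s) / D s := by
  have hD' : 0 ≤ D' := ge_of_tendsto hD <|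
    (hDpos.and self_mem_nhdsWithin).mono fun _ hs => (div_pos hs.1 hs.2).le
  rcases hD'.eq_or_lt with rfl | hD'
  · exact ⟨1, one_pos, (tendsto_sub_mul_div_atTop hf hD hDpos hc).eventually_ge_atTop 1⟩
  · have hL : 0 < (f' - c) / D' := div_pos (sub_pos.2 hc) hD'
    exact ⟨_, half_pos hL, (tendsto_sub_mul_div hf hD hD'.ne').eventually
      (eventually_ge_nhds (half_lt_self hL))⟩

lemma exists_eventually_sub_mul_div_le_mul {D₀ : ℝ}
    (hf : Tendsto (fun s => f s / s) (𝓝[>] 0) (𝓝 f'))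
    (hD : Tendsto D (𝓝[>] 0) (𝓝 D₀)) (hD₀ : 0 < D₀) :
    ∃ C, ∀ᶠ s in 𝓝[>] 0, (f s - c * s) / D s ≤ C * s := by
  have h : Tendsto (fun s => (f s / s - c) / D s) (𝓝[>] 0) (𝓝 ((f' - c) / D₀)) :=
    (hf.sub_const c).div hD hD₀.ne'
  refine ⟨(f' - c) / D₀ + 1, ?_⟩
  filter_upwards [h.eventually (eventually_le_nhds (lt_add_one _)), self_mem_nhdsWithin]
    with s hle hs
  calc (f s - c * s) / D s = (f s / s - c) / D s * s := by
        rw [div_mul_eq_mul_div, sub_mul, div_mul_cancel₀ _ (ne_of_gt hs)]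
    _ ≤ ((f' - c) / D₀ + 1) * s := mul_le_mul_of_nonneg_right hle (le_of_lt hs)

end RatioLimits

section Profile

variable {f D φ : ℝ → ℝ} {a b : ℝ}

lemma waveSpeed_lt_derivWithin (hf : DifferentiableWithinAt ℝ f (Icc 0 1) 0)
    (hfconc : StrictConcaveOn ℝ (Icc 0 1) f) (hb : 0 < b) (hb1 : b ≤ 1) :
    waveSpeed f 0 b < derivWithin f (Icc 0 1) 0 := by
  rw [waveSpeed, ← slope_def_field]
  exact hfconc.slope_lt_derivWithin (left_mem_Icc.2 zero_le_one) ⟨hb.le, hb1⟩ hb hf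

lemma IsProfile.continuous (hφ : IsProfile f D a b φ) : Continuous φ := hφ.1

lemma IsProfile.monotone (hφ : IsProfile f D a b φ) : Monotone φ := hφ.2.1

lemma IsProfile.tendsto_atBot (hφ : IsProfile f D a b φ) : Tendsto φ atBot (𝓝 a) := hφ.2.2.2.1

lemma IsProfile.tendsto_atTop (hφ : IsProfile f D a b φ) : Tendsto φ atTop (𝓝 b) :=
  hφ.2.2.2.2.1

lemma IsProfile.nonneg (hφ : IsProfile f D 0 b φ) (ξ : ℝ) : 0 ≤ φ ξ :=
  (hφ.2.2.1 ξ).1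

lemma IsProfile.differentiableAt (hφ : IsProfile f D a b φ) {ξ : ℝ} (hξ : φ ξ ∈ Ioo a b) :
    DifferentiableAt ℝ φ ξ := by
  have hopen : IsOpen {ξ | a < φ ξ ∧ φ ξ < b} :=
    (isOpen_lt continuous_const hφ.continuous).inter (isOpen_lt hφ.continuous continuous_const)
  exact (hφ.2.2.2.2.2.1.differentiableOn two_ne_zero).differentiableAt (hopen.mem_nhds hξ)

lemma IsProfile.mul_deriv_eq (hφ : IsProfile f D 0 b φ) (hf0 : f 0 = 0) {ξ : ℝ}
    (hξ : φ ξ ∈ Ioo 0 b) :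
    D (φ ξ) * deriv φ ξ = f (φ ξ) - waveSpeed f 0 b * φ ξ := by
  simpa [redFlux, hf0] using (hφ.2.2.2.2.2.2 ξ hξ.1 hξ.2).2

lemma IsProfile.eventually_deriv_eq (hφ : IsProfile f D 0 b φ) (hf0 : f 0 = 0)
    (hD : ∀ x ∈ Ioo 0 b, 0 < D x) (hb : 0 < b) {l : Filter ℝ}
    (hl : Tendsto φ l (𝓝[>] 0)) :
    ∀ᶠ ξ in l, φ ξ ∈ Ioo 0 b ∧
      deriv φ ξ = (f (φ ξ) - waveSpeed f 0 b * φ ξ) / D (φ ξ) :=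
  (hl.eventually (Ioo_mem_nhdsGT hb)).mono fun ξ hξ =>
    ⟨hξ, eq_div_of_mul_eq (hD _ hξ).ne' (by rw [mul_comm]; exact hφ.mul_deriv_eq hf0 hξ)⟩

lemma IsProfile.exists_eq_zero (hφ : IsProfile f D 0 b φ) (hf0 : f 0 = 0)
    (hD : ∀ x ∈ Ioo 0 b, 0 < D x) (hb : 0 < b) {m : ℝ} (hm : 0 < m)
    (hG : ∀ᶠ s in 𝓝[>] 0, m ≤ (f s - waveSpeed f 0 b * s) / D s) :
    ∃ z, φ z = 0 := by
  by_contra! hne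
  have hl : Tendsto φ atBot (𝓝[>] 0) := tendsto_nhdsWithin_iff.2
    ⟨hφ.tendsto_atBot, Eventually.of_forall fun ξ => (hφ.nonneg ξ).lt_of_ne' (hne ξ)⟩
  obtain ⟨a, ha⟩ := eventually_atBot.1
    ((hφ.eventually_deriv_eq hf0 hD hb hl).and (hl.eventually hG))
  have hbot : Tendsto φ atBot atBot := tendsto_atBot_of_le_deriv hm hφ.continuous.continuousOn
    (fun x hx => hφ.differentiableAt (ha x hx.le).1.1)
    (fun x hx => (ha x hx.le).1.2 ▸ (ha x hx.le).2)
  exact not_tendsto_nhds_of_tendsto_atBot hbot 0 hφ.tendsto_atBot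

lemma IsProfile.pos_of_eventually_le_mul (hφ : IsProfile f D 0 b φ) (hf0 : f 0 = 0)
    (hD : ∀ x ∈ Ioo 0 b, 0 < D x) (hb : 0 < b) {C : ℝ}
    (hG : ∀ᶠ s in 𝓝[>] 0, (f s - waveSpeed f 0 b * s) / D s ≤ C * s) (ξ : ℝ) :
    0 < φ ξ := by
  refine (hφ.nonneg ξ).lt_of_ne' fun hξ => ?_
  obtain ⟨p, hp⟩ := (hφ.tendsto_atTop.eventually (eventually_gt_nhds hb)).exists
  obtain ⟨ν, hν, hpos⟩ :=
    exists_eq_zero_forall_lt_pos hφ.continuous hφ.monotone hφ.nonneg hξ hp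
  have hl := tendsto_nhdsGT_of_eq_zero hφ.continuous hν hpos
  obtain ⟨u, hu, hsub⟩ := mem_nhdsGT_iff_exists_Ioo_subset.1
    ((hφ.eventually_deriv_eq hf0 hD hb hl).and (hl.eventually hG))
  have hgronwall := le_mul_exp_of_deriv_le_mul (le_of_lt hu) hφ.continuous.continuousOn
    (fun x hx => hφ.differentiableAt (hsub hx).1.1) (fun x hx => (hsub hx).1.2 ▸ (hsub hx).2)
  rw [hν, zero_mul] at hgronwall
  exact (hpos u hu).not_ge hgronwall

lemma IsProfile.exists_forall_le_eq_zero (hφ : IsProfile f D 0 b φ)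
    (hf : DifferentiableWithinAt ℝ f (Icc 0 1) 0) (hfconc : StrictConcaveOn ℝ (Icc 0 1) f)
    (hf0 : f 0 = 0) (hD : DifferentiableWithinAt ℝ D (Icc 0 1) 0) (hD0 : D 0 = 0)
    (hDpos : ∀ x ∈ Ioo 0 b, 0 < D x) (hb : 0 < b) (hb1 : b ≤ 1) :
    ∃ ν, {ξ | 0 < φ ξ ∧ φ ξ < b} ⊆ Ioi ν ∧ ∀ ξ ≤ ν, φ ξ = 0 := by
  obtain ⟨m, hm, hG⟩ := exists_pos_eventually_le_sub_mul_div
    (hf.tendsto_div_self (Icc_mem_nhdsGT one_pos) hf0)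
    (hD.tendsto_div_self (Icc_mem_nhdsGT one_pos) hD0)
    (mem_of_superset (Ioo_mem_nhdsGT hb) hDpos) (waveSpeed_lt_derivWithin hf hfconc hb hb1)
  obtain ⟨z, hz⟩ := hφ.exists_eq_zero hf0 hDpos hb hm hG
  refine ⟨z, fun ξ hξ => mem_Ioi.2 <| lt_of_not_ge fun hξz => ?_, fun ξ hξz => ?_⟩
  · exact hξ.1.not_ge (hz ▸ hφ.monotone hξz)
  · exact le_antisymm (hz ▸ hφ.monotone hξz) (hφ.nonneg ξ)

lemma IsProfile.diffusion_zero_eq_zero (hφ : IsProfile f D 0 b φ)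
    (hf : DifferentiableWithinAt ℝ f (Icc 0 1) 0) (hf0 : f 0 = 0)
    (hD : DifferentiableWithinAt ℝ D (Icc 0 1) 0) (hD0 : 0 ≤ D 0)
    (hDpos : ∀ x ∈ Ioo 0 b, 0 < D x) (hb : 0 < b) {z : ℝ} (hz : φ z = 0) :
    D 0 = 0 := by
  refine le_antisymm (not_lt.1 fun hD0pos => ?_) hD0
  obtain ⟨C, hC⟩ := exists_eventually_sub_mul_div_le_mul (c := waveSpeed f 0 b)
    (hf.tendsto_div_self (Icc_mem_nhdsGT one_pos) hf0)
    (hD.continuousWithinAt.mono_of_mem_nhdsWithin (Icc_mem_nhdsGT one_pos)) hD0pos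
  exact (hφ.pos_of_eventually_le_mul hf0 hDpos hb hC z).ne' hz

lemma IsProfile.tendsto_at_left_edge (hφ : IsProfile f D 0 b φ)
    (hf : DifferentiableWithinAt ℝ f (Icc 0 1) 0) (hfconc : StrictConcaveOn ℝ (Icc 0 1) f)
    (hf0 : f 0 = 0) (hD : DifferentiableWithinAt ℝ D (Icc 0 1) 0) (hD0 : D 0 = 0)
    (hDpos : ∀ x ∈ Ioo 0 b, 0 < D x) (hb : 0 < b) (hb1 : b ≤ 1) {ν : ℝ} (hν : φ ν = 0)
    (hpos : ∀ ξ, ν < ξ → 0 < φ ξ) :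
    (0 < derivWithin D (Icc 0 1) 0 →
      Tendsto (deriv φ) (𝓝[>] ν)
        (𝓝 ((b * derivWithin f (Icc 0 1) 0 - f b) / (b * derivWithin D (Icc 0 1) 0)))) ∧
    (derivWithin D (Icc 0 1) 0 = 0 → Tendsto (deriv φ) (𝓝[>] ν) atTop) ∧
    Tendsto (fun ξ => D (φ ξ) * deriv φ ξ) (𝓝[>] ν) (𝓝 0) := by
  have hl := tendsto_nhdsGT_of_eq_zero hφ.continuous hν hpos
  have hderiv := (hφ.eventually_deriv_eq hf0 hDpos hb hl).mono fun _ h => h.2.symm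
  have hfs := hf.tendsto_div_self (Icc_mem_nhdsGT one_pos) hf0
  have hDs := hD.tendsto_div_self (Icc_mem_nhdsGT one_pos) hD0
  refine ⟨fun hD' => ?_, fun hD' => ?_, ?_⟩
  · have h := ((tendsto_sub_mul_div (c := waveSpeed f 0 b) hfs hDs hD'.ne').comp hl).congr' hderiv
    convert h using 2
    simp only [waveSpeed, hf0, sub_zero]
    field_simp
  · rw [hD'] at hDs
    exact ((tendsto_sub_mul_div_atTop hfs hDs (mem_of_superset (Ioo_mem_nhdsGT hb) hDpos)
      (waveSpeed_lt_derivWithin hf hfconc hb hb1)).comp hl).congr' hderiv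
  · have hfc : Tendsto f (𝓝[>] 0) (𝓝 (f 0)) :=
      hf.continuousWithinAt.mono_of_mem_nhdsWithin (Icc_mem_nhdsGT one_pos)
    have h := (hfc.comp hl).sub ((hl.mono_right nhdsWithin_le_nhds).const_mul (waveSpeed f 0 b))
    rw [hf0, mul_zero, sub_zero] at h
    exact h.congr' ((hl.eventually (Ioo_mem_nhdsGT hb)).mono fun ξ hξ =>
      (hφ.mul_deriv_eq hf0 hξ).symm)

end Profile

theorem stmt1_general (f D : ℝ → ℝ) (hf : FluxAssumption f) (hD : DiffAssumption D)
    (lm lp : ℝ) (hl : lm < lp) (h1 : lp ≤ 1)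
    (φ : ℝ → ℝ) (hφ : IsProfile f D lm lp φ) :
    ((D 0 = 0 ∧ lm = 0) ↔
      ∃ ν : ℝ, {ξ | lm < φ ξ ∧ φ ξ < lp} ⊆ Ioi ν ∧ ∀ ξ ≤ ν, φ ξ = 0) ∧
    (∀ ν : ℝ, {ξ | lm < φ ξ ∧ φ ξ < lp} ⊆ Ioi ν → (∀ ξ ≤ ν, φ ξ = 0) →
      IsGLB {ξ | lm < φ ξ ∧ φ ξ < lp} ν →
      (0 < derivWithin D (Icc 0 1) 0 →
        Tendsto (deriv φ) (𝓝[>] ν)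
          (𝓝 ((lp * derivWithin f (Icc 0 1) 0 - f lp) / (lp * derivWithin D (Icc 0 1) 0)))) ∧
      (derivWithin D (Icc 0 1) 0 = 0 → Tendsto (deriv φ) (𝓝[>] ν) atTop) ∧
      Tendsto (fun ξ => D (φ ξ) * deriv φ ξ) (𝓝[>] ν) (𝓝 0)) := by
  obtain ⟨hfC, hfconc, -, hf0, -⟩ := hf
  obtain ⟨hDC, hDnonneg, hDpos⟩ := hD
  have hf' := hfC.differentiableOn one_ne_zero 0 (left_mem_Icc.2 zero_le_one)
  have hD' := hDC.differentiableOn one_ne_zero 0 (left_mem_Icc.2 zero_le_one)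
  have hD0_nonneg := hDnonneg 0 (left_mem_Icc.2 zero_le_one)
  have hDpos' : ∀ x ∈ Ioo 0 lp, 0 < D x := fun x hx => hDpos x ⟨hx.1, hx.2.trans_le h1⟩
  have hlm : ∀ ν, (∀ ξ ≤ ν, φ ξ = 0) → lm = 0 := fun ν hν => tendsto_nhds_unique hφ.tendsto_atBot
    (tendsto_const_nhds.congr' ((eventually_le_atBot ν).mono fun ξ hξ => (hν ξ hξ).symm))
  refine ⟨⟨?_, fun ⟨ν, _, hν⟩ => ?_⟩, fun ν _ hν hglb => ?_⟩
  · rintro ⟨hD0, rfl⟩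
    exact hφ.exists_forall_le_eq_zero hf' hfconc hf0 hD' hD0 hDpos' hl h1
  · obtain rfl := hlm ν hν
    exact ⟨hφ.diffusion_zero_eq_zero hf' hf0 hD' hD0_nonneg hDpos' hl (hν ν le_rfl), rfl⟩
  · obtain rfl := hlm ν hν
    refine hφ.tendsto_at_left_edge hf' hfconc hf0 hD'
      (hφ.diffusion_zero_eq_zero hf' hf0 hD' hD0_nonneg hDpos' hl (hν ν le_rfl)) hDpos' hl h1
      (hν ν le_rfl) fun ξ hξ => ?_
    obtain ⟨η, hη, -, hηξ⟩ := hglb.exists_between hξ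
    exact hη.1.trans_le (hφ.monotone hηξ.le)

/-- Characterization of left-degeneracy of profiles and the boundary behaviour of `φ'`
at the finite left endpoint `ν⁻` of `I`. -/
theorem stmt1 (f D : ℝ → ℝ) (hf : FluxAssumption f) (hD : DiffAssumption D)
    (lm lp : ℝ) (h0 : 0 ≤ lm) (hl : lm < lp) (h1 : lp ≤ 1)
    (φ : ℝ → ℝ) (hφ : IsProfile f D lm lp φ) :
    ((D 0 = 0 ∧ lm = 0) ↔
      ∃ ν : ℝ, {ξ | lm < φ ξ ∧ φ ξ < lp} ⊆ Ioi ν ∧ ∀ ξ ≤ ν, φ ξ = 0) ∧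
    (∀ ν : ℝ, {ξ | lm < φ ξ ∧ φ ξ < lp} ⊆ Ioi ν → (∀ ξ ≤ ν, φ ξ = 0) →
      IsGLB {ξ | lm < φ ξ ∧ φ ξ < lp} ν →
      (0 < derivWithin D (Icc 0 1) 0 →
        Tendsto (deriv φ) (𝓝[>] ν)
          (𝓝 ((lp * derivWithin f (Icc 0 1) 0 - f lp) / (lp * derivWithin D (Icc 0 1) 0)))) ∧
      (derivWithin D (Icc 0 1) 0 = 0 → Tendsto (deriv φ) (𝓝[>] ν) atTop) ∧
      Tendsto (fun ξ => D (φ ξ) * deriv φ ξ) (𝓝[>] ν) (𝓝 0)) :=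
  stmt1_general f D hf hD lm lp hl h1 φ hφ
end

section
/- In the network setup, suppose (φ_h)_{h∈H} is a traveling wave of the network problem at profile level. Then the following three statements are equivalent: (i) there exists j ∈ J with c_j = 0; (ii) c_i = 0 for all i ∈ I; (iii) c_j = 0 for all j ∈ J. Consequently, either c_h = 0 for every h ∈ H (the wave is stationary) or c_j ≠ 0 for every j ∈ J and c_i ≠ 0 for some i ∈ I. -/
/-!
On an outgoing road with `c_j = 0` the left side of (Tool) is constant in `t`, so the right side
is a constant positive combination of the nondecreasing functions `t ↦ c_i φ_i(c_i t)`; hence each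
of them is constant, which for a profile joining `ℓ_i⁻ < ℓ_i⁺` forces `c_i = 0`. Conversely, if
every `c_i` vanishes then the right side of (Tool) is constant, and the same argument on the left
side gives `c_j = 0` for every `j`.
-/

open Set Filter MeasureTheory
open scoped Topology Classical

/-- Speed of road `h` given end–state functions. -/
noncomputable def spd {H : Type*} (f : H → ℝ → ℝ) (lm lp : H → ℝ) (h : H) : ℝ :=
  waveSpeed (f h) (lm h) (lp h)

/-- Reduced flux of road `h` given end–state functions. -/
noncomputable def gred {H : Type*} (f : H → ℝ → ℝ) (lm lp : H → ℝ) (h : H) (ρ : ℝ) : ℝ :=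
  redFlux (f h) (lm h) (lp h) ρ

/-- The network setup: flux/diffusivity assumptions on each road, and coefficients
`α i j ∈ (0,1]` with unit row sums. -/
def NetworkSetup {m n : ℕ} (f D : Fin m ⊕ Fin n → ℝ → ℝ) (α : Fin m → Fin n → ℝ) : Prop :=
  (∀ h, FluxAssumption (f h)) ∧ (∀ h, DiffAssumption (D h)) ∧
  (∀ i j, α i j ∈ Ioc (0:ℝ) 1) ∧ (∀ i, ∑ j, α i j = 1)

/-- Admissible end states: `0 ≤ ℓ_h⁻ < ℓ_h⁺ ≤ 1` for every road. -/
def EndStates {H : Type*} (lm lp : H → ℝ) : Prop :=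
  ∀ h, 0 ≤ lm h ∧ lm h < lp h ∧ lp h ≤ 1

/-- The coupling condition (Tool):
`c_j φ_j(c_j t) + g_j(ℓ_j⁻) = ∑_i α_{i,j} (c_i φ_i(c_i t) + g_i(ℓ_i⁻))` for all `t, j`. -/
def Tool {m n : ℕ} (f : Fin m ⊕ Fin n → ℝ → ℝ) (α : Fin m → Fin n → ℝ)
    (lm lp : Fin m ⊕ Fin n → ℝ) (φ : Fin m ⊕ Fin n → ℝ → ℝ) : Prop :=
  ∀ t : ℝ, ∀ j : Fin n,
    spd f lm lp (Sum.inr j) * φ (Sum.inr j) (spd f lm lp (Sum.inr j) * t)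
      + gred f lm lp (Sum.inr j) (lm (Sum.inr j))
    = ∑ i : Fin m, α i j *
        (spd f lm lp (Sum.inl i) * φ (Sum.inl i) (spd f lm lp (Sum.inl i) * t)
          + gred f lm lp (Sum.inl i) (lm (Sum.inl i)))

/-- A traveling wave of the network problem at profile level: a family of profiles
satisfying the coupling condition (Tool). -/
def IsTravelingWave {m n : ℕ} (f D : Fin m ⊕ Fin n → ℝ → ℝ) (α : Fin m → Fin n → ℝ)
    (lm lp : Fin m ⊕ Fin n → ℝ) (φ : Fin m ⊕ Fin n → ℝ → ℝ) : Prop :=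
  (∀ h, IsProfile (f h) (D h) (lm h) (lp h) (φ h)) ∧ Tool f α lm lp φ

/-- `L_{i,j}⁻`: `ℓ_i⁻` if `c_i c_j ≥ 0`, and `ℓ_i⁺` otherwise. -/
noncomputable def Lminus {m n : ℕ} (f : Fin m ⊕ Fin n → ℝ → ℝ)
    (lm lp : Fin m ⊕ Fin n → ℝ) (i : Fin m) (j : Fin n) : ℝ :=
  if 0 ≤ spd f lm lp (Sum.inl i) * spd f lm lp (Sum.inr j) then lm (Sum.inl i)
  else lp (Sum.inl i)

/-- `L_{i,j}⁺`: `ℓ_i⁺` if `c_i c_j ≥ 0`, and `ℓ_i⁻` otherwise. -/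
noncomputable def Lplus {m n : ℕ} (f : Fin m ⊕ Fin n → ℝ → ℝ)
    (lm lp : Fin m ⊕ Fin n → ℝ) (i : Fin m) (j : Fin n) : ℝ :=
  if 0 ≤ spd f lm lp (Sum.inl i) * spd f lm lp (Sum.inr j) then lp (Sum.inl i)
  else lm (Sum.inl i)

/-- `k_j = ∑_{i ∈ I₀ᶜ} A_{i,j} L_{i,j}⁻ - ℓ_j⁻` with `A_{i,j} = α_{i,j} c_i / c_j`. -/
noncomputable def kconst {m n : ℕ} (f : Fin m ⊕ Fin n → ℝ → ℝ) (α : Fin m → Fin n → ℝ)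
    (lm lp : Fin m ⊕ Fin n → ℝ) (j : Fin n) : ℝ :=
  (∑ i ∈ Finset.univ.filter (fun i : Fin m => spd f lm lp (Sum.inl i) ≠ 0),
      (α i j * (spd f lm lp (Sum.inl i) / spd f lm lp (Sum.inr j))) * Lminus f lm lp i j)
    - lm (Sum.inr j)

lemma monotone_mul_comp_mul {φ : ℝ → ℝ} (hφ : Monotone φ) (c : ℝ) :
    Monotone fun t => c * φ (c * t) := by
  rcases le_total 0 c with hc | hc
  · exact (hφ.comp (monotone_mul_left_of_nonneg hc)).const_mul hc
  · exact (hφ.comp_antitone (antitone_mul_left hc)).const_mul_of_nonpos hc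

lemma eq_zero_of_mul_comp_mul_const {φ : ℝ → ℝ} {a b c : ℝ} (hab : a ≠ b)
    (ha : Tendsto φ atBot (𝓝 a)) (hb : Tendsto φ atTop (𝓝 b))
    (hc : ∀ s t, c * φ (c * s) = c * φ (c * t)) : c = 0 := by
  by_contra hc0
  have hφ : ∀ s, φ s = φ 0 := fun s => by
    simpa [mul_div_cancel₀ _ hc0, hc0] using hc (s / c) 0
  exact hab <| (tendsto_nhds_unique (ha.congr hφ) tendsto_const_nhds).trans
    (tendsto_nhds_unique (hb.congr hφ) tendsto_const_nhds).symm

lemma eq_of_sum_mul_eq_of_monotone {ι : Type*} [Fintype ι] {w : ι → ℝ} (hw : ∀ i, 0 < w i)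
    {u : ι → ℝ → ℝ} (hu : ∀ i, Monotone (u i))
    (hconst : ∀ s t, ∑ i, w i * u i s = ∑ i, w i * u i t) (i : ι) (s t : ℝ) :
    u i s = u i t := by
  wlog hst : s ≤ t generalizing s t
  · exact (this t s (le_of_not_ge hst)).symm
  have hle : ∀ k ∈ Finset.univ, w k * u k s ≤ w k * u k t :=
    fun k _ => mul_le_mul_of_nonneg_left (hu k hst) (hw k).le
  exact mul_left_cancel₀ (hw i).ne'
    ((Finset.sum_eq_sum_iff_of_le hle).1 (hconst s t) i (Finset.mem_univ i))

namespace IsTravelingWave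

variable {m n : ℕ} {f D : Fin m ⊕ Fin n → ℝ → ℝ} {α : Fin m → Fin n → ℝ}
  {lm lp : Fin m ⊕ Fin n → ℝ} {φ : Fin m ⊕ Fin n → ℝ → ℝ}

lemma speed_eq_zero_of_mul_comp_mul_const (hends : EndStates lm lp)
    (hTW : IsTravelingWave f D α lm lp φ) {h : Fin m ⊕ Fin n}
    (hconst : ∀ s t, spd f lm lp h * φ h (spd f lm lp h * s)
      = spd f lm lp h * φ h (spd f lm lp h * t)) :
    spd f lm lp h = 0 :=
  eq_zero_of_mul_comp_mul_const (hends h).2.1.ne (hTW.1 h).2.2.2.1 (hTW.1 h).2.2.2.2.1 hconst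

lemma inl_speed_eq_zero (hnet : NetworkSetup f D α) (hends : EndStates lm lp)
    (hTW : IsTravelingWave f D α lm lp φ) {j : Fin n} (hj : spd f lm lp (Sum.inr j) = 0)
    (i : Fin m) : spd f lm lp (Sum.inl i) = 0 := by
  have hconst := eq_of_sum_mul_eq_of_monotone (fun k => (hnet.2.2.1 k j).1)
    (fun k => (monotone_mul_comp_mul (hTW.1 (Sum.inl k)).2.1 _).add_const
      (gred f lm lp (Sum.inl k) (lm (Sum.inl k))))
    (fun s t => by rw [← hTW.2 s j, ← hTW.2 t j, hj, zero_mul, zero_mul]) i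
  exact hTW.speed_eq_zero_of_mul_comp_mul_const hends
    fun s t => add_right_cancel (hconst s t)

lemma inr_speed_eq_zero (hends : EndStates lm lp) (hTW : IsTravelingWave f D α lm lp φ)
    (hI : ∀ i, spd f lm lp (Sum.inl i) = 0) (j : Fin n) : spd f lm lp (Sum.inr j) = 0 := by
  refine hTW.speed_eq_zero_of_mul_comp_mul_const hends fun s t => ?_
  have hs := hTW.2 s j
  have ht := hTW.2 t j
  simp only [hI, zero_mul] at hs ht
  linarith

end IsTravelingWave

theorem stmt8_general (m n : ℕ) (hn : 0 < n)
    (f D : Fin m ⊕ Fin n → ℝ → ℝ) (α : Fin m → Fin n → ℝ)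
    (hnet : NetworkSetup f D α)
    (lm lp : Fin m ⊕ Fin n → ℝ) (hends : EndStates lm lp)
    (φ : Fin m ⊕ Fin n → ℝ → ℝ)
    (hTW : IsTravelingWave f D α lm lp φ) :
    ((∃ j : Fin n, spd f lm lp (Sum.inr j) = 0) ↔
      (∀ i : Fin m, spd f lm lp (Sum.inl i) = 0)) ∧
    ((∀ i : Fin m, spd f lm lp (Sum.inl i) = 0) ↔
      (∀ j : Fin n, spd f lm lp (Sum.inr j) = 0)) ∧
    ((∀ h, spd f lm lp h = 0) ∨
      ((∀ j : Fin n, spd f lm lp (Sum.inr j) ≠ 0) ∧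
        ∃ i : Fin m, spd f lm lp (Sum.inl i) ≠ 0)) := by
  have hJI : ∀ j, spd f lm lp (Sum.inr j) = 0 → ∀ i, spd f lm lp (Sum.inl i) = 0 :=
    fun _ hj => hTW.inl_speed_eq_zero hnet hends hj
  have hIJ := hTW.inr_speed_eq_zero hends
  let j₀ : Fin n := ⟨0, hn⟩
  refine ⟨⟨fun ⟨j, hj⟩ => hJI j hj, fun hI => ⟨j₀, hIJ hI j₀⟩⟩,
    ⟨hIJ, fun hJ => hJI j₀ (hJ j₀)⟩, ?_⟩
  by_cases hI : ∀ i, spd f lm lp (Sum.inl i) = 0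
  · exact Or.inl (Sum.forall.2 ⟨hI, hIJ hI⟩)
  · exact Or.inr ⟨fun j hj => hI (hJI j hj), not_forall.1 hI⟩

/-- Either a traveling wave of the network problem is stationary (all speeds vanish), or
no outgoing speed vanishes and some incoming speed is nonzero. -/
theorem stmt8 (m n : ℕ) (hm : 0 < m) (hn : 0 < n)
    (f D : Fin m ⊕ Fin n → ℝ → ℝ) (α : Fin m → Fin n → ℝ)
    (hnet : NetworkSetup f D α)
    (lm lp : Fin m ⊕ Fin n → ℝ) (hends : EndStates lm lp)
    (φ : Fin m ⊕ Fin n → ℝ → ℝ)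
    (hTW : IsTravelingWave f D α lm lp φ) :
    ((∃ j : Fin n, spd f lm lp (Sum.inr j) = 0) ↔
      (∀ i : Fin m, spd f lm lp (Sum.inl i) = 0)) ∧
    ((∀ i : Fin m, spd f lm lp (Sum.inl i) = 0) ↔
      (∀ j : Fin n, spd f lm lp (Sum.inr j) = 0)) ∧
    ((∀ h, spd f lm lp h = 0) ∨
      ((∀ j : Fin n, spd f lm lp (Sum.inr j) ≠ 0) ∧
        ∃ i : Fin m, spd f lm lp (Sum.inl i) ≠ 0)) :=
  stmt8_general m n hn f D α hnet lm lp hends φ hTW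
end

section
/- Fix end states ℓ_i^± ∈ [0,1] with ℓ_i⁻ < ℓ_i⁺ for i ∈ I, with speeds c_i = (f_i(ℓ_i⁺)−f_i(ℓ_i⁻))/(ℓ_i⁺−ℓ_i⁻), and fix j ∈ J. Then there exist ℓ_j^± ∈ [0,1] with ℓ_j⁻ < ℓ_j⁺ satisfying max{f_j(ℓ_j⁻), f_j(ℓ_j⁺)} = Σ_{i∈I} α_{i,j} max{f_i(ℓ_i⁻), f_i(ℓ_i⁺)} and min{f_j(ℓ_j⁻), f_j(ℓ_j⁺)} = Σ_{i∈I} α_{i,j} min{f_i(ℓ_i⁻), f_i(ℓ_i⁺)} if and only if: max_{[0,1]} f_j > Σ_{i∈I} α_{i,j} max{f_i(ℓ_i⁻), f_i(ℓ_i⁺)} in case c_1 = … = c_m = 0, and max_{[0,1]} f_j ≥ Σ_{i∈I} α_{i,j} max{f_i(ℓ_i⁻), f_i(ℓ_i⁺)} otherwise. In this situation, the pair (ℓ_j⁻, ℓ_j⁺) is uniquely determined if and only if c_i = 0 for every i ∈ I. -/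
open Set Filter MeasureTheory
open scoped Topology Classical

section Aux
variable {g : ℝ → ℝ} {θ : ℝ}

lemma aux_strict_max (hsc : StrictConcaveOn ℝ (Icc 0 1) g)
    (hθ : θ ∈ Icc (0:ℝ) 1) (hmax : ∀ x ∈ Icc (0:ℝ) 1, g x ≤ g θ)
    {x : ℝ} (hx : x ∈ Icc (0:ℝ) 1) (hne : x ≠ θ) : g x < g θ := by
  by_contra h
  push_neg at h
  have hz := hsc.2 hx hθ hne (by norm_num : (0:ℝ) < 1/2) (by norm_num : (0:ℝ) < 1/2) (by norm_num)
  have hmem : (1/2 : ℝ) • x + (1/2 : ℝ) • θ ∈ Icc (0:ℝ) 1 :=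
    hsc.1 hx hθ (by norm_num) (by norm_num) (by norm_num)
  have h2 := hmax _ hmem
  simp only [smul_eq_mul] at hz h2
  linarith

lemma aux_mono (hsc : StrictConcaveOn ℝ (Icc 0 1) g)
    (hθ : θ ∈ Icc (0:ℝ) 1) (hmax : ∀ x ∈ Icc (0:ℝ) 1, g x ≤ g θ)
    {x y : ℝ} (hx : x ∈ Icc (0:ℝ) 1) (hy : y ∈ Icc (0:ℝ) 1)
    (hxy : x < y) (hyθ : y ≤ θ) : g x < g y := by
  rcases eq_or_lt_of_le hyθ with rfl | hyθ
  · exact aux_strict_max hsc hθ hmax hx (ne_of_lt hxy)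
  · have hxθ : x < θ := hxy.trans hyθ
    have hd : (0:ℝ) < θ - x := by linarith
    have hd' : θ - x ≠ 0 := ne_of_gt hd
    have ha : 0 < (θ - y)/(θ - x) := div_pos (by linarith) hd
    have hb : 0 < (y - x)/(θ - x) := div_pos (by linarith) hd
    have hab : (θ - y)/(θ - x) + (y - x)/(θ - x) = 1 := by field_simp; ring
    have hcomb : ((θ - y)/(θ - x)) • x + ((y - x)/(θ - x)) • θ = y := by
      simp only [smul_eq_mul]; field_simp; ring
    have hz := hsc.2 hx hθ (ne_of_lt hxθ) ha hb hab
    rw [hcomb] at hz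
    simp only [smul_eq_mul] at hz
    have hgx : g x ≤ g θ := hmax x hx
    have h3 : (θ - y)/(θ - x) * g x + (y - x)/(θ - x) * g x = g x := by
      field_simp; ring
    linarith [mul_nonneg hb.le (sub_nonneg.2 hgx), h3, hz]

lemma aux_anti (hsc : StrictConcaveOn ℝ (Icc 0 1) g)
    (hθ : θ ∈ Icc (0:ℝ) 1) (hmax : ∀ x ∈ Icc (0:ℝ) 1, g x ≤ g θ)
    {x y : ℝ} (hx : x ∈ Icc (0:ℝ) 1) (hy : y ∈ Icc (0:ℝ) 1)
    (hθx : θ ≤ x) (hxy : x < y) : g y < g x := by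
  rcases eq_or_lt_of_le hθx with rfl | hθx
  · exact aux_strict_max hsc hθ hmax hy (ne_of_gt hxy)
  · have hθy : θ < y := hθx.trans hxy
    have hd : (0:ℝ) < y - θ := by linarith
    have hd' : y - θ ≠ 0 := ne_of_gt hd
    have ha : 0 < (y - x)/(y - θ) := div_pos (by linarith) hd
    have hb : 0 < (x - θ)/(y - θ) := div_pos (by linarith) hd
    have hab : (y - x)/(y - θ) + (x - θ)/(y - θ) = 1 := by field_simp; ring
    have hcomb : ((y - x)/(y - θ)) • θ + ((x - θ)/(y - θ)) • y = x := by
      simp only [smul_eq_mul]; field_simp; ring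
    have hz := hsc.2 hθ hy (ne_of_lt hθy) ha hb hab
    rw [hcomb] at hz
    simp only [smul_eq_mul] at hz
    have hgy : g y ≤ g θ := hmax y hy
    have h3 : (y - x)/(y - θ) * g y + (x - θ)/(y - θ) * g y = g y := by
      field_simp; ring
    linarith [mul_nonneg ha.le (sub_nonneg.2 hgy), h3, hz]

end Aux

/-- Solvability of the max/min balances for the outgoing end states, and uniqueness iff all
incoming speeds vanish. -/
theorem stmt9 (m n : ℕ) (hm : 0 < m) (hn : 0 < n)
    (f : Fin m ⊕ Fin n → ℝ → ℝ) (hf : ∀ h, FluxAssumption (f h))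
    (α : Fin m → Fin n → ℝ) (hα : ∀ i j, α i j ∈ Ioc (0:ℝ) 1)
    (hα1 : ∀ i, ∑ j, α i j = 1)
    (lmi lpi : Fin m → ℝ)
    (hli : ∀ i, lmi i ∈ Icc (0:ℝ) 1 ∧ lpi i ∈ Icc (0:ℝ) 1 ∧ lmi i < lpi i)
    (j : Fin n)
    (Smax Smin : ℝ)
    (hSmax : Smax = ∑ i : Fin m, α i j *
      max (f (Sum.inl i) (lmi i)) (f (Sum.inl i) (lpi i)))
    (hSmin : Smin = ∑ i : Fin m, α i j *
      min (f (Sum.inl i) (lmi i)) (f (Sum.inl i) (lpi i)))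
    (P : ℝ → ℝ → Prop)
    (hP : ∀ a b : ℝ, P a b ↔
      (a ∈ Icc (0:ℝ) 1 ∧ b ∈ Icc (0:ℝ) 1 ∧ a < b ∧
        max (f (Sum.inr j) a) (f (Sum.inr j) b) = Smax ∧
        min (f (Sum.inr j) a) (f (Sum.inr j) b) = Smin)) :
    ((∃ a b : ℝ, P a b) ↔
      (((∀ i, waveSpeed (f (Sum.inl i)) (lmi i) (lpi i) = 0) →
          Smax < sSup (f (Sum.inr j) '' Icc 0 1)) ∧
       ((¬ ∀ i, waveSpeed (f (Sum.inl i)) (lmi i) (lpi i) = 0) →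
          Smax ≤ sSup (f (Sum.inr j) '' Icc 0 1)))) ∧
    ((∃ a b : ℝ, P a b) →
      ((∃! p : ℝ × ℝ, P p.1 p.2) ↔
        ∀ i, waveSpeed (f (Sum.inl i)) (lmi i) (lpi i) = 0)) := by
  classical
  set g := f (Sum.inr j) with hgdef
  obtain ⟨hgc, hgsc, hgnn, hg0, hg1⟩ := hf (Sum.inr j)
  rw [← hgdef] at hgc hgsc hgnn hg0 hg1
  have hgcont : ContinuousOn g (Icc 0 1) := hgc.continuousOn
  obtain ⟨θ, hθ, hθmax⟩ := isCompact_Icc.exists_isMaxOn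
    (⟨0, le_refl (0:ℝ), zero_le_one⟩ : (Icc (0:ℝ) 1).Nonempty) hgcont
  have hθmax' : ∀ x ∈ Icc (0:ℝ) 1, g x ≤ g θ := fun x hx => hθmax hx
  have hM : sSup (g '' Icc 0 1) = g θ := by
    apply IsGreatest.csSup_eq
    exact ⟨⟨θ, hθ, rfl⟩, by rintro y ⟨x, hx, rfl⟩; exact hθmax' x hx⟩
  -- c_i = 0 ↔ equal flux values
  have hceq : ∀ i, waveSpeed (f (Sum.inl i)) (lmi i) (lpi i) = 0 ↔
      f (Sum.inl i) (lpi i) = f (Sum.inl i) (lmi i) := by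
    intro i
    have hne : lpi i - lmi i ≠ 0 := sub_ne_zero.2 (ne_of_gt (hli i).2.2)
    unfold waveSpeed
    rw [div_eq_zero_iff]
    constructor
    · rintro (h | h)
      · exact sub_eq_zero.1 h
      · exact absurd h hne
    · intro h; exact Or.inl (sub_eq_zero.2 h)
  -- nonnegativity of each term
  have hαpos : ∀ i, 0 < α i j := fun i => (hα i j).1
  have hminmax : ∀ i, min (f (Sum.inl i) (lmi i)) (f (Sum.inl i) (lpi i)) ≤
      max (f (Sum.inl i) (lmi i)) (f (Sum.inl i) (lpi i)) := fun i => min_le_max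
  have hminnn : ∀ i, 0 ≤ min (f (Sum.inl i) (lmi i)) (f (Sum.inl i) (lpi i)) := by
    intro i
    obtain ⟨_, _, hinn, _, _⟩ := hf (Sum.inl i)
    exact le_min (hinn _ (hli i).1) (hinn _ (hli i).2.1)
  have hSminnn : 0 ≤ Smin := by
    rw [hSmin]
    exact Finset.sum_nonneg fun i _ => mul_nonneg (hαpos i).le (hminnn i)
  have hle : Smin ≤ Smax := by
    rw [hSmin, hSmax]
    exact Finset.sum_le_sum fun i _ =>
      mul_le_mul_of_nonneg_left (hminmax i) (hαpos i).le
  -- all c = 0 ↔ Smax = Smin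
  have hallc : (∀ i, waveSpeed (f (Sum.inl i)) (lmi i) (lpi i) = 0) ↔ Smax = Smin := by
    constructor
    · intro hall
      rw [hSmax, hSmin]
      apply Finset.sum_congr rfl
      intro i _
      rw [(hceq i).1 (hall i)]
      simp
    · intro h
      intro i
      by_contra hc
      have hne : f (Sum.inl i) (lpi i) ≠ f (Sum.inl i) (lmi i) := fun h' => hc ((hceq i).2 h')
      have hstrict : min (f (Sum.inl i) (lmi i)) (f (Sum.inl i) (lpi i)) <
          max (f (Sum.inl i) (lmi i)) (f (Sum.inl i) (lpi i)) := min_lt_max.2 (Ne.symm hne)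
      have : Smin < Smax := by
        rw [hSmin, hSmax]
        apply Finset.sum_lt_sum
        · exact fun k _ => mul_le_mul_of_nonneg_left (hminmax k) (hαpos k).le
        · exact ⟨i, Finset.mem_univ i, by
            exact mul_lt_mul_of_pos_left hstrict (hαpos i)⟩
      linarith [h.ge]
  -- if ¬ all c = 0 then Smin < Smax
  have hstrictS : (¬ ∀ i, waveSpeed (f (Sum.inl i)) (lmi i) (lpi i) = 0) → Smin < Smax := by
    intro hnall
    rcases lt_or_eq_of_le hle with h | h
    · exact h
    · exact absurd (hallc.2 h.symm) hnall
  -- IVT helpers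
  have hθ1 : θ ∈ Icc (0:ℝ) 1 := hθ
  have hivt1 : ∀ S : ℝ, 0 ≤ S → S ≤ g θ → ∃ a ∈ Icc 0 θ, g a = S := by
    intro S hS0 hSθ
    have hsub : Icc (0:ℝ) θ ⊆ Icc 0 1 := Icc_subset_Icc le_rfl hθ1.2
    have := intermediate_value_Icc hθ1.1 (hgcont.mono hsub)
    have hmem : S ∈ Icc (g 0) (g θ) := by rw [hg0]; exact ⟨hS0, hSθ⟩
    obtain ⟨a, haI, haS⟩ := this hmem
    exact ⟨a, haI, haS⟩
  have hivt2 : ∀ S : ℝ, 0 ≤ S → S ≤ g θ → ∃ b ∈ Icc θ 1, g b = S := by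
    intro S hS0 hSθ
    have hsub : Icc θ (1:ℝ) ⊆ Icc 0 1 := Icc_subset_Icc hθ1.1 le_rfl
    have := intermediate_value_Icc' hθ1.2 (hgcont.mono hsub)
    have hmem : S ∈ Icc (g 1) (g θ) := by rw [hg1]; exact ⟨hS0, hSθ⟩
    obtain ⟨b, hbI, hbS⟩ := this hmem
    exact ⟨b, hbI, hbS⟩
  have hsub1 : Icc (0:ℝ) θ ⊆ Icc 0 1 := Icc_subset_Icc le_rfl hθ1.2
  have hsub2 : Icc θ (1:ℝ) ⊆ Icc 0 1 := Icc_subset_Icc hθ1.1 le_rfl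
  -- Forward direction of existence: bound Smax ≤ g θ (and strict in the c=0 case)
  have fwd : (∃ a b : ℝ, P a b) →
      (((∀ i, waveSpeed (f (Sum.inl i)) (lmi i) (lpi i) = 0) → Smax < g θ) ∧ Smax ≤ g θ) := by
    rintro ⟨a, b, hab⟩
    rw [hP] at hab
    obtain ⟨ha, hb, hlt, hmx, hmn⟩ := hab
    have hSle : Smax ≤ g θ := by
      rw [← hmx]
      exact max_le (hθmax' a ha) (hθmax' b hb)
    refine ⟨?_, hSle⟩
    intro hall
    have hEq : Smax = Smin := hallc.1 hall
    have hga : g a = Smax ∧ g b = Smax := by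
      rcases le_total (g a) (g b) with h | h
      · rw [max_eq_right h] at hmx
        rw [min_eq_left h] at hmn
        exact ⟨by rw [hmn, ← hEq], hmx⟩
      · rw [max_eq_left h] at hmx
        rw [min_eq_right h] at hmn
        exact ⟨hmx, by rw [hmn, ← hEq]⟩
    -- a ≠ θ or b ≠ θ
    rcases ne_or_eq a θ with hne | rfl
    · have := aux_strict_max hgsc hθ1 hθmax' ha hne
      rw [hga.1] at this; exact this
    · have hne : b ≠ a := ne_of_gt hlt
      have := aux_strict_max hgsc hθ1 hθmax' hb hne
      rw [hga.2] at this; exact this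
  constructor
  · -- Part 1
    rw [hM]
    constructor
    · intro hex
      obtain ⟨h1, h2⟩ := fwd hex
      exact ⟨h1, fun _ => h2⟩
    · rintro ⟨hc1, hc2⟩
      by_cases hall : ∀ i, waveSpeed (f (Sum.inl i)) (lmi i) (lpi i) = 0
      · have hS := hc1 hall
        have hEq : Smax = Smin := hallc.1 hall
        have hS0 : 0 ≤ Smax := hEq ▸ hSminnn
        obtain ⟨a, haI, haS⟩ := hivt1 Smax hS0 hS.le
        obtain ⟨b, hbI, hbS⟩ := hivt2 Smax hS0 hS.le
        have haθ : a ≠ θ := by rintro rfl; rw [haS] at hS; exact lt_irrefl _ hS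
        have hbθ : b ≠ θ := by rintro rfl; rw [hbS] at hS; exact lt_irrefl _ hS
        have hab : a < b :=
          lt_of_lt_of_le (lt_of_le_of_ne haI.2 haθ) (le_of_lt (lt_of_le_of_ne hbI.1 (Ne.symm hbθ)))
        refine ⟨a, b, (hP a b).2 ⟨hsub1 haI, hsub2 hbI, hab, ?_, ?_⟩⟩
        · rw [haS, hbS, max_self]
        · rw [haS, hbS, min_self, ← hEq]
      · have hS := hc2 hall
        have hSm : Smin < Smax := hstrictS hall
        obtain ⟨a, haI, haS⟩ := hivt1 Smin hSminnn (hSm.le.trans hS)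
        obtain ⟨b, hbI, hbS⟩ := hivt2 Smax (hSminnn.trans hle) hS
        have hab : a < b := by
          rcases lt_or_eq_of_le (haI.2.trans hbI.1) with h | h
          · exact h
          · exfalso; rw [h, hbS] at haS; linarith
        refine ⟨a, b, (hP a b).2 ⟨hsub1 haI, hsub2 hbI, hab, ?_, ?_⟩⟩
        · rw [haS, hbS, max_eq_right hSm.le]
        · rw [haS, hbS, min_eq_left hSm.le]
  · -- Part 2
    intro hex
    obtain ⟨hfwd1, hfwd2⟩ := fwd hex
    constructor
    · -- uniqueness → all c = 0, by contraposition
      intro huniq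
      by_contra hnall
      have hSm : Smin < Smax := hstrictS hnall
      obtain ⟨a₁, ha₁I, ha₁S⟩ := hivt1 Smin hSminnn (hle.trans hfwd2)
      obtain ⟨b₁, hb₁I, hb₁S⟩ := hivt2 Smax (hSminnn.trans hle) hfwd2
      obtain ⟨a₂, ha₂I, ha₂S⟩ := hivt1 Smax (hSminnn.trans hle) hfwd2
      obtain ⟨b₂, hb₂I, hb₂S⟩ := hivt2 Smin hSminnn (hle.trans hfwd2)
      have hp1 : P a₁ b₁ := by
        have hab : a₁ < b₁ := by
          rcases lt_or_eq_of_le (ha₁I.2.trans hb₁I.1) with h | h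
          · exact h
          · exfalso; rw [h, hb₁S] at ha₁S; linarith
        exact (hP _ _).2 ⟨hsub1 ha₁I, hsub2 hb₁I, hab,
          by rw [ha₁S, hb₁S, max_eq_right hSm.le],
          by rw [ha₁S, hb₁S, min_eq_left hSm.le]⟩
      have hp2 : P a₂ b₂ := by
        have hab : a₂ < b₂ := by
          rcases lt_or_eq_of_le (ha₂I.2.trans hb₂I.1) with h | h
          · exact h
          · exfalso; rw [h, hb₂S] at ha₂S; linarith
        exact (hP _ _).2 ⟨hsub1 ha₂I, hsub2 hb₂I, hab,
          by rw [ha₂S, hb₂S, max_eq_left hSm.le],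
          by rw [ha₂S, hb₂S, min_eq_right hSm.le]⟩
      obtain ⟨p, _, hup⟩ := huniq
      have h1 := hup (a₁, b₁) hp1
      have h2 := hup (a₂, b₂) hp2
      have : a₁ = a₂ := by
        have := h1.trans h2.symm
        exact (Prod.mk.injEq _ _ _ _ ▸ this).1
      rw [this, ha₂S] at ha₁S
      linarith
    · -- all c = 0 → uniqueness
      intro hall
      have hEq : Smax = Smin := hallc.1 hall
      have hS : Smax < g θ := hfwd1 hall
      -- characterize any solution
      have hchar : ∀ a b : ℝ, P a b →
          a ∈ Icc (0:ℝ) 1 ∧ b ∈ Icc (0:ℝ) 1 ∧ g a = Smax ∧ g b = Smax ∧ a < θ ∧ θ < b := by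
        intro a b hab
        rw [hP] at hab
        obtain ⟨ha, hb, hlt, hmx, hmn⟩ := hab
        have hg2 : g a = Smax ∧ g b = Smax := by
          rcases le_total (g a) (g b) with h | h
          · rw [max_eq_right h] at hmx
            rw [min_eq_left h] at hmn
            exact ⟨by rw [hmn, ← hEq], hmx⟩
          · rw [max_eq_left h] at hmx
            rw [min_eq_right h] at hmn
            exact ⟨hmx, by rw [hmn, ← hEq]⟩
        have haθ : a ≠ θ := by rintro rfl; rw [hg2.1] at hS; exact lt_irrefl _ hS
        have hbθ : b ≠ θ := by rintro rfl; rw [hg2.2] at hS; exact lt_irrefl _ hS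
        have haθ' : a < θ := by
          rcases lt_or_gt_of_ne haθ with h | h
          · exact h
          · exfalso
            have := aux_anti hgsc hθ1 hθmax' ha hb h.le hlt
            rw [hg2.1, hg2.2] at this; exact lt_irrefl _ this
        have hbθ' : θ < b := by
          rcases lt_or_gt_of_ne hbθ with h | h
          · exfalso
            have := aux_mono hgsc hθ1 hθmax' ha hb hlt h.le
            rw [hg2.1, hg2.2] at this; exact lt_irrefl _ this
          · exact h
        exact ⟨ha, hb, hg2.1, hg2.2, haθ', hbθ'⟩
      obtain ⟨a₀, b₀, hp₀⟩ := hex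
      refine ⟨(a₀, b₀), hp₀, ?_⟩
      rintro ⟨a, b⟩ hp
      obtain ⟨ha, hb, hgaS, hgbS, haθ, hbθ⟩ := hchar a b hp
      obtain ⟨ha₀, hb₀, hga₀S, hgb₀S, ha₀θ, hb₀θ⟩ := hchar a₀ b₀ hp₀
      have hAA : a = a₀ := by
        rcases lt_trichotomy a a₀ with h | h | h
        · exfalso
          have := aux_mono hgsc hθ1 hθmax' ha ha₀ h ha₀θ.le
          rw [hgaS, hga₀S] at this; exact lt_irrefl _ this
        · exact h
        · exfalso
          have := aux_mono hgsc hθ1 hθmax' ha₀ ha h haθ.le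
          rw [hgaS, hga₀S] at this; exact lt_irrefl _ this
      have hBB : b = b₀ := by
        rcases lt_trichotomy b b₀ with h | h | h
        · exfalso
          have := aux_anti hgsc hθ1 hθmax' hb hb₀ hbθ.le h
          rw [hgbS, hgb₀S] at this; exact lt_irrefl _ this
        · exact h
        · exfalso
          have := aux_anti hgsc hθ1 hθmax' hb₀ hb hb₀θ.le h
          rw [hgbS, hgb₀S] at this; exact lt_irrefl _ this
      simp [hAA, hBB]
end
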